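/- Let n ≥ 1, let σ be a permutation of {1,…,2n}, and let s be the number of equivalence classes of the vertex-identification relation ∼ on ℤ/2nℤ. Then s ≤ n + 1 and n + 1 − s is even. (Consequently g := (n + 1 − s)/2 is a nonnegative integer, the genus of the closed orientable surface Q_W obtained by gluing the sides of the 2n-gon, whose induced cell decomposition has s vertices, n edges and one 2-cell.) -/

import Mathlib

/-- The vertex-identification relation on `ZMod (2n)` (labels, mod `2n`, of the vertices
`v₁,…,v_{2n}` of the regular `2n`-gon): for each `k ∈ {1,…,n}` (0-based `k' : Fin n`),
`τ(2k−1) ∼ τ(2k)+1` and `τ(2k−1)+1 ∼ τ(2k)`, where `τ = σ⁻¹` and, 0-based,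
`τ(2k−1) = (σ.symm 2k') + 1` and `τ(2k) = (σ.symm (2k'+1)) + 1`. -/
def vertRel (n : ℕ) (σ : Equiv.Perm (Fin (2 * n))) (x y : ZMod (2 * n)) : Prop :=
  ∃ k : Fin n,
    (x = (((σ.symm ⟨2 * (k : ℕ), by have := k.isLt; omega⟩ : Fin (2 * n)) : ℕ)
            : ZMod (2 * n)) + 1 ∧
     y = (((σ.symm ⟨2 * (k : ℕ) + 1, by have := k.isLt; omega⟩ : Fin (2 * n)) : ℕ)
            : ZMod (2 * n)) + 2) ∨
    (x = (((σ.symm ⟨2 * (k : ℕ), by have := k.isLt; omega⟩ : Fin (2 * n)) : ℕ)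
            : ZMod (2 * n)) + 2 ∧
     y = (((σ.symm ⟨2 * (k : ℕ) + 1, by have := k.isLt; omega⟩ : Fin (2 * n)) : ℕ)
            : ZMod (2 * n)) + 1)



open Relation

section QuotLemmas

variable {α : Type*}

/-- Quotients of relations generating the same equivalence relation are equivalent. -/
def quotCongrOfEqvGen {r r' : α → α → Prop}
    (h : ∀ x y, EqvGen r x y ↔ EqvGen r' x y) : Quot r ≃ Quot r' where
  toFun := Quot.lift (Quot.mk r') fun a b hab =>
    Quot.eqvGen_sound ((h a b).1 (EqvGen.rel a b hab))
  invFun := Quot.lift (Quot.mk r) fun a b hab =>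
    Quot.eqvGen_sound ((h a b).2 (EqvGen.rel a b hab))
  left_inv := by intro q; induction q using Quot.ind; rfl
  right_inv := by intro q; induction q using Quot.ind; rfl

theorem card_quot_congr {r r' : α → α → Prop} (h : ∀ x y, r x y ↔ r' x y) :
    Nat.card (Quot r) = Nat.card (Quot r') := by
  obtain rfl : r = r' := funext fun x => funext fun y => propext (h x y)
  rfl

theorem eqvGen_pair_iff (r : α → α → Prop) (a b x y : α) :
    EqvGen (fun u v => r u v ∨ (u = a ∧ v = b)) x y ↔
      EqvGen r x y ∨ (EqvGen r x a ∧ EqvGen r b y) ∨ (EqvGen r x b ∧ EqvGen r a y) := by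
  constructor
  · intro h
    induction h with
    | rel u v huv =>
      rcases huv with h | ⟨rfl, rfl⟩
      · exact Or.inl (EqvGen.rel _ _ h)
      · exact Or.inr (Or.inl ⟨EqvGen.refl _, EqvGen.refl _⟩)
    | refl u => exact Or.inl (EqvGen.refl _)
    | symm u v _ ih =>
      rcases ih with h | ⟨h1, h2⟩ | ⟨h1, h2⟩
      · exact Or.inl (EqvGen.symm _ _ h)
      · exact Or.inr (Or.inr ⟨EqvGen.symm _ _ h2, EqvGen.symm _ _ h1⟩)
      · exact Or.inr (Or.inl ⟨EqvGen.symm _ _ h2, EqvGen.symm _ _ h1⟩)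
    | trans u v w _ _ ih1 ih2 =>
      rcases ih1 with h | ⟨h1, h2⟩ | ⟨h1, h2⟩ <;>
        rcases ih2 with g | ⟨g1, g2⟩ | ⟨g1, g2⟩
      · exact Or.inl (EqvGen.trans _ _ _ h g)
      · exact Or.inr (Or.inl ⟨EqvGen.trans _ _ _ h g1, g2⟩)
      · exact Or.inr (Or.inr ⟨EqvGen.trans _ _ _ h g1, g2⟩)
      · exact Or.inr (Or.inl ⟨h1, EqvGen.trans _ _ _ h2 g⟩)
      · exact Or.inl (EqvGen.trans _ _ _ h1
          (EqvGen.trans _ _ _ (EqvGen.symm _ _ (EqvGen.trans _ _ _ h2 g1)) g2))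
      · exact Or.inl (EqvGen.trans _ _ _ h1 g2)
      · exact Or.inr (Or.inr ⟨h1, EqvGen.trans _ _ _ h2 g⟩)
      · exact Or.inl (EqvGen.trans _ _ _ h1 g2)
      · exact Or.inr (Or.inr ⟨h1, g2⟩)
  · intro h
    have hmono : ∀ u v : α, EqvGen r u v →
        EqvGen (fun u v => r u v ∨ (u = a ∧ v = b)) u v :=
      fun u v huv => EqvGen.mono (fun p q hpq => Or.inl hpq) u v huv
    have hab : EqvGen (fun u v => r u v ∨ (u = a ∧ v = b)) a b :=
      EqvGen.rel _ _ (Or.inr ⟨rfl, rfl⟩)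
    rcases h with h | ⟨h1, h2⟩ | ⟨h1, h2⟩
    · exact hmono _ _ h
    · exact EqvGen.trans _ _ _ (hmono _ _ h1) (EqvGen.trans _ _ _ hab (hmono _ _ h2))
    · exact EqvGen.trans _ _ _ (hmono _ _ h1)
        (EqvGen.trans _ _ _ (EqvGen.symm _ _ hab) (hmono _ _ h2))

theorem card_quot_le_pair [Finite α] (r : α → α → Prop) (a b : α) :
    Nat.card (Quot r) ≤ Nat.card (Quot (fun u v => r u v ∨ (u = a ∧ v = b))) + 1 := by
  classical
  set r' := fun u v => r u v ∨ (u = a ∧ v = b) with hr'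
  have hf : ∀ (x y : α), r x y → Quot.mk r' x = Quot.mk r' y :=
    fun x y h => Quot.sound (Or.inl h)
  have key : ∀ x y : α, Quot.mk r' x = Quot.mk r' y → Quot.mk r x ≠ Quot.mk r a →
      Quot.mk r y ≠ Quot.mk r a → Quot.mk r x = Quot.mk r y := by
    intro x y hxy hx hy
    rcases (eqvGen_pair_iff r a b x y).1 (Quot.eqvGen_exact hxy) with h | ⟨h1, _⟩ | ⟨_, h2⟩
    · exact Quot.eqvGen_sound h
    · exact absurd (Quot.eqvGen_sound h1) hx
    · exact absurd (Quot.eqvGen_sound h2).symm hy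
  let ψ : Quot r → Option (Quot r') := fun c =>
    if c = Quot.mk r a then none else some (Quot.lift (Quot.mk r') hf c)
  have hinj : Function.Injective ψ := by
    intro c d hcd
    by_cases hc : c = Quot.mk r a <;> by_cases hd : d = Quot.mk r a
    · rw [hc, hd]
    · simp only [ψ, if_pos hc, if_neg hd] at hcd; exact absurd hcd.symm (Option.some_ne_none _)
    · simp only [ψ, if_neg hc, if_pos hd] at hcd; exact absurd hcd (Option.some_ne_none _)
    · simp only [ψ, if_neg hc, if_neg hd, Option.some.injEq] at hcd
      obtain ⟨x, rfl⟩ := Quot.exists_rep c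
      obtain ⟨y, rfl⟩ := Quot.exists_rep d
      exact key x y hcd hc hd
  haveI := Fintype.ofFinite (Quot r')
  calc Nat.card (Quot r) ≤ Nat.card (Option (Quot r')) :=
        Nat.card_le_card_of_injective ψ hinj
    _ = Nat.card (Quot r') + 1 := Finite.card_option

theorem card_quot_le_list [Finite α] (l : List (α × α)) (r : α → α → Prop) :
    Nat.card (Quot r) ≤ Nat.card (Quot (fun u v => r u v ∨ (u, v) ∈ l)) + l.length := by
  induction l generalizing r with
  | nil =>
    rw [card_quot_congr (r' := r) (fun x y => by simp)]
    simp
  | cons p t ih =>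
    have h1 := card_quot_le_pair r p.1 p.2
    have h2 := ih (fun u v => r u v ∨ (u = p.1 ∧ v = p.2))
    rw [card_quot_congr (r := fun u v => (r u v ∨ (u = p.1 ∧ v = p.2)) ∨ (u, v) ∈ t)
        (r' := fun u v => r u v ∨ (u, v) ∈ p :: t) (fun x y => by
          simp only [List.mem_cons, Prod.ext_iff]
          tauto)] at h2
    simp only [List.length_cons]
    omega

end QuotLemmas


open Equiv Equiv.Perm

section SameCycleCount

variable {β : Type*} [Fintype β] [DecidableEq β]

/-- Counting the orbits of a permutation: orbits = fixed points + nontrivial cycles. -/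
theorem card_quot_sameCycle (g : Perm β) :
    Nat.card (Quot g.SameCycle) + g.cycleType.sum = Fintype.card β + Multiset.card g.cycleType := by
  classical
  have hsum : g.cycleType.sum = g.support.card := g.sum_cycleType
  have hC : Multiset.card g.cycleType = g.cycleFactorsFinset.card := by
    rw [cycleType_def, Multiset.card_map]; rfl
  -- the bijection
  let f0 : β → (Function.fixedPoints g) ⊕ {c // c ∈ g.cycleFactorsFinset} := fun x =>
    if h : g x = x then Sum.inl ⟨x, h⟩
    else Sum.inr ⟨g.cycleOf x, cycleOf_mem_cycleFactorsFinset_iff.2 (mem_support.2 h)⟩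
  have hfix : ∀ x y : β, g.SameCycle x y → g x = x → x = y := by
    intro x y hxy hx
    obtain ⟨i, hi⟩ := hxy
    rw [← hi, zpow_apply_eq_self_of_apply_eq_self hx]
  have sound : ∀ x y : β, g.SameCycle x y → f0 x = f0 y := by
    intro x y hxy
    by_cases hx : g x = x
    · obtain rfl := hfix x y hxy hx; rfl
    · by_cases hy : g y = y
      · obtain rfl := hfix y x hxy.symm hy; rfl
      · simp only [f0, dif_neg hx, dif_neg hy, Sum.inr.injEq, Subtype.mk.injEq]
        exact hxy.cycleOf_eq
  let F : Quot g.SameCycle → (Function.fixedPoints g) ⊕ {c // c ∈ g.cycleFactorsFinset} :=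
    Quot.lift f0 sound
  have hbij : Function.Bijective F := by
    constructor
    · intro c d h
      obtain ⟨x, rfl⟩ := Quot.exists_rep c
      obtain ⟨y, rfl⟩ := Quot.exists_rep d
      change f0 x = f0 y at h
      by_cases hx : g x = x <;> by_cases hy : g y = y
      · simp only [f0, dif_pos hx, dif_pos hy, Sum.inl.injEq, Subtype.mk.injEq] at h
        rw [show x = y from congrArg Subtype.val h]
      · simp only [f0, dif_pos hx, dif_neg hy] at h
        exact absurd h (by simp)
      · simp only [f0, dif_neg hx, dif_pos hy] at h
        exact absurd h (by simp)
      · simp only [f0, dif_neg hx, dif_neg hy, Sum.inr.injEq, Subtype.mk.injEq] at h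
        have hy' : y ∈ (g.cycleOf y).support :=
          mem_support_cycleOf_iff.2 ⟨SameCycle.refl _ _, mem_support.2 hy⟩
        rw [← h] at hy'
        exact Quot.sound (mem_support_cycleOf_iff.1 hy').1
    · intro t
      rcases t with ⟨x, hx⟩ | ⟨c, hc⟩
      · exact ⟨Quot.mk _ x, dif_pos hx⟩
      · have hc' := (mem_cycleFactorsFinset_iff).1 hc
        obtain ⟨x, hx1, -⟩ := hc'.1
        have hxs : x ∈ c.support := mem_support.2 hx1
        have hgx : g x ≠ x := by rw [← hc'.2 x hxs]; exact hx1
        refine ⟨Quot.mk _ x, ?_⟩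
        simp only [F, f0, Quot.lift_mk, dif_neg hgx, Sum.inr.injEq, Subtype.mk.injEq]
        exact (cycle_is_cycleOf hxs hc).symm
  have hcard : Nat.card (Quot g.SameCycle) =
      Nat.card (Function.fixedPoints g) + Nat.card {c // c ∈ g.cycleFactorsFinset} := by
    rw [Nat.card_congr (Equiv.ofBijective F hbij), Nat.card_sum]
  have hfixcard : Nat.card (Function.fixedPoints g) = Fintype.card β - g.cycleType.sum := by
    rw [Nat.card_eq_fintype_card]
    exact g.card_fixedPoints
  have hfaccard : Nat.card {c // c ∈ g.cycleFactorsFinset} = g.cycleFactorsFinset.card := by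
    rw [Nat.card_eq_fintype_card]
    exact Fintype.card_coe _
  have hle : g.cycleType.sum ≤ Fintype.card β := by
    rw [hsum]; exact Finset.card_le_univ _
  rw [hcard, hfixcard, hfaccard, hC]
  omega

end SameCycleCount


open Equiv Equiv.Perm

section FlipPerm

variable (n : ℕ)

def d0 (k : Fin n) : Fin (2 * n) := ⟨2 * (k : ℕ), by have := k.isLt; omega⟩
def d1 (k : Fin n) : Fin (2 * n) := ⟨2 * (k : ℕ) + 1, by have := k.isLt; omega⟩

theorem d0_ne_d1 (k : Fin n) : d0 n k ≠ d1 n k := by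
  intro h
  have := congrArg Fin.val h
  simp only [d0, d1] at this
  omega

theorem sw_disjoint :
    (↑(Finset.univ : Finset (Fin n)) : Set (Fin n)).Pairwise fun a b =>
      (Equiv.swap (d0 n a) (d1 n a)).Disjoint (Equiv.swap (d0 n b) (d1 n b)) := by
  intro a _ b _ hab x
  have hv : (a : ℕ) ≠ (b : ℕ) := fun hv => hab (Fin.ext hv)
  by_cases h : x = d0 n a ∨ x = d1 n a
  · right
    apply Equiv.swap_apply_of_ne_of_ne <;>
      · intro hx
        rcases h with h | h <;>
          · rw [h] at hx
            have := congrArg Fin.val hx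
            simp only [d0, d1] at this
            omega
  · push_neg at h
    exact Or.inl (Equiv.swap_apply_of_ne_of_ne h.1 h.2)

def flipPerm : Perm (Fin (2 * n)) :=
  Finset.univ.noncommProd (fun k => Equiv.swap (d0 n k) (d1 n k))
    ((sw_disjoint n).imp fun _ _ h => h.commute)

theorem flipPerm_apply_of_mem (k : Fin n) (x : Fin (2 * n)) (hx : x = d0 n k ∨ x = d1 n k) :
    flipPerm n x = Equiv.swap (d0 n k) (d1 n k) x := by
  classical
  have h1 : (Finset.univ : Finset (Fin n)) = insert k (Finset.univ.erase k) :=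
    (Finset.insert_erase (Finset.mem_univ k)).symm
  have e1 : flipPerm n = Finset.noncommProd (insert k (Finset.univ.erase k))
      (fun k => Equiv.swap (d0 n k) (d1 n k))
      (by rw [← h1]; exact (sw_disjoint n).imp fun _ _ h => h.commute) := by
    unfold flipPerm
    exact Finset.noncommProd_congr h1 (fun _ _ => rfl) _
  have hd' : (↑(Finset.univ.erase k) : Set (Fin n)).Pairwise fun a b =>
      (Equiv.swap (d0 n a) (d1 n a)).Disjoint (Equiv.swap (d0 n b) (d1 n b)) :=
    (sw_disjoint n).mono (Finset.coe_subset.2 (Finset.subset_univ _))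
  have e2 : flipPerm n = Equiv.swap (d0 n k) (d1 n k) *
      Finset.noncommProd (Finset.univ.erase k)
        (fun k => Equiv.swap (d0 n k) (d1 n k)) (hd'.imp fun _ _ h => h.commute) := by
    rw [e1, Finset.noncommProd_insert_of_notMem _ _ _ _ (Finset.notMem_erase k _)]
  rw [e2, Equiv.Perm.mul_apply]
  congr 1
  have hsupp := Equiv.Perm.support_noncommProd hd'
  have hxnot : x ∉ (Finset.noncommProd (Finset.univ.erase k)
      (fun k => Equiv.swap (d0 n k) (d1 n k)) (hd'.imp fun _ _ h => h.commute)).support := by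
    rw [hsupp]
    intro hmem
    obtain ⟨i, hi, hxi⟩ := Finset.mem_biUnion.1 hmem
    have hik : i ≠ k := (Finset.mem_erase.1 hi).1
    rw [Equiv.Perm.support_swap (d0_ne_d1 n i), Finset.mem_insert, Finset.mem_singleton] at hxi
    have hikv : (i : ℕ) ≠ (k : ℕ) := fun hv => hik (Fin.ext hv)
    rcases hxi with h' | h' <;> rcases hx with h'' | h'' <;>
      · rw [h''] at h'
        have := congrArg Fin.val h'
        simp only [d0, d1] at this
        omega
  exact Equiv.Perm.notMem_support.1 hxnot

theorem flipPerm_d0 (k : Fin n) : flipPerm n (d0 n k) = d1 n k := by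
  rw [flipPerm_apply_of_mem n k _ (Or.inl rfl), Equiv.swap_apply_left]

theorem flipPerm_d1 (k : Fin n) : flipPerm n (d1 n k) = d0 n k := by
  rw [flipPerm_apply_of_mem n k _ (Or.inr rfl), Equiv.swap_apply_right]

theorem sign_flipPerm : Equiv.Perm.sign (flipPerm n) = (-1) ^ n := by
  unfold flipPerm
  rw [Finset.map_noncommProd _ _ _ Equiv.Perm.sign]
  refine (Finset.noncommProd_eq_pow_card _ _ _ (-1 : ℤˣ)
    (fun k _ => Equiv.Perm.sign_swap (d0_ne_d1 n k))).trans ?_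
  simp

end FlipPerm

section VertPerm

variable (n : ℕ) [NeZero (2 * n)] (σ : Perm (Fin (2 * n)))

def finToZMod : Fin (2 * n) ≃ ZMod (2 * n) where
  toFun i := ((i : ℕ) : ZMod (2 * n))
  invFun z := ⟨z.val, z.val_lt⟩
  left_inv i := Fin.ext (by simp [ZMod.val_natCast_of_lt i.isLt])
  right_inv z := ZMod.natCast_rightInverse z

def AV (k : Fin n) : ZMod (2 * n) := ((σ.symm (d0 n k) : ℕ) : ZMod (2 * n))
def BV (k : Fin n) : ZMod (2 * n) := ((σ.symm (d1 n k) : ℕ) : ZMod (2 * n))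

def vertPerm : Perm (ZMod (2 * n)) :=
  (Equiv.addRight (2 : ZMod (2 * n))) * ((finToZMod n).permCongr (σ⁻¹ * flipPerm n * σ)) *
    (Equiv.addRight (-1 : ZMod (2 * n)))

theorem vertPerm_apply (x : ZMod (2 * n)) :
    vertPerm n σ x = finToZMod n (σ.symm (flipPerm n (σ ((finToZMod n).symm (x - 1))))) + 2 := by
  simp only [vertPerm, Equiv.Perm.mul_apply, Equiv.permCongr_apply, Equiv.coe_addRight,
    sub_eq_add_neg]
  rfl

theorem vertPerm_finToZMod (i : Fin (2 * n)) :
    vertPerm n σ (finToZMod n i + 1) = finToZMod n (σ.symm (flipPerm n (σ i))) + 2 := by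
  rw [vertPerm_apply]
  have h : finToZMod n i + 1 - 1 = finToZMod n i := by ring
  rw [h, Equiv.symm_apply_apply]

theorem vertPerm_AV (k : Fin n) : vertPerm n σ (AV n σ k + 1) = BV n σ k + 2 := by
  have h : AV n σ k = finToZMod n (σ.symm (d0 n k)) := rfl
  rw [h, vertPerm_finToZMod, Equiv.apply_symm_apply, flipPerm_d0]
  rfl

theorem vertPerm_BV (k : Fin n) : vertPerm n σ (BV n σ k + 1) = AV n σ k + 2 := by
  have h : BV n σ k = finToZMod n (σ.symm (d1 n k)) := rfl
  rw [h, vertPerm_finToZMod, Equiv.apply_symm_apply, flipPerm_d1]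
  rfl

theorem vert_spec (x : ZMod (2 * n)) :
    ∃ k : Fin n, x = AV n σ k + 1 ∨ x = BV n σ k + 1 := by
  set i := (finToZMod n).symm (x - 1) with hi
  have hx : finToZMod n i + 1 = x := by rw [hi, Equiv.apply_symm_apply]; ring
  have hjlt := (σ i).isLt
  rcases Nat.even_or_odd ((σ i : ℕ)) with ⟨c, hc⟩ | ⟨c, hc⟩
  · have hkn : ((σ i : ℕ)) / 2 < n := by omega
    refine ⟨⟨_, hkn⟩, Or.inl ?_⟩
    have hd : d0 n ⟨_, hkn⟩ = σ i := Fin.ext (by simp only [d0]; omega)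
    have hA : AV n σ ⟨_, hkn⟩ = finToZMod n i := by
      unfold AV
      rw [hd, Equiv.symm_apply_apply]
      rfl
    rw [hA, hx]
  · have hkn : ((σ i : ℕ)) / 2 < n := by omega
    refine ⟨⟨_, hkn⟩, Or.inr ?_⟩
    have hd : d1 n ⟨_, hkn⟩ = σ i := Fin.ext (by simp only [d1]; omega)
    have hB : BV n σ ⟨_, hkn⟩ = finToZMod n i := by
      unfold BV
      rw [hd, Equiv.symm_apply_apply]
      rfl
    rw [hB, hx]

theorem sign_vertPerm (hn : 1 ≤ n) :
    Equiv.Perm.sign (vertPerm n σ) = (-1) ^ (n + 1) := by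
  haveI : Fact (1 < 2 * n) := ⟨by omega⟩
  set a1 := Equiv.addRight (1 : ZMod (2 * n)) with ha1
  have a1_pow : ∀ (m : ℕ) (x : ZMod (2 * n)), (a1 ^ m) x = x + m := by
    intro m
    induction m with
    | zero => intro x; simp
    | succ m ih =>
      intro x
      rw [pow_succ, Equiv.Perm.mul_apply, ih]
      simp only [ha1, Equiv.coe_addRight]
      push_cast
      ring
  have hcycle : a1.IsCycle := by
    refine ⟨0, ?_, ?_⟩
    · simp only [ha1, Equiv.coe_addRight, zero_add]
      exact one_ne_zero
    · intro y _
      refine ⟨(y.val : ℤ), ?_⟩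
      rw [zpow_natCast, a1_pow, zero_add]
      exact ZMod.natCast_rightInverse y
  have hsupp : a1.support = Finset.univ := by
    ext x
    simp only [Equiv.Perm.mem_support, Finset.mem_univ, iff_true, ha1, Equiv.coe_addRight]
    intro h
    exact one_ne_zero (add_left_cancel (h.trans (add_zero x).symm))
  have hsigna1 : Equiv.Perm.sign a1 = -1 := by
    rw [hcycle.sign, hsupp]
    rw [Finset.card_univ, ZMod.card]
    have : Even (2 * n) := ⟨n, two_mul n⟩
    rw [this.neg_one_pow]
  have hsign2 : Equiv.Perm.sign (Equiv.addRight (2 : ZMod (2 * n))) = 1 := by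
    have h2 : Equiv.addRight (2 : ZMod (2 * n)) = a1 * a1 := by
      ext x
      simp only [ha1, Equiv.coe_addRight, Equiv.Perm.mul_apply]
      ring
    rw [h2, map_mul, hsigna1]
    simp
  have hsignm1 : Equiv.Perm.sign (Equiv.addRight (-1 : ZMod (2 * n))) = -1 := by
    have hone : Equiv.addRight (-1 : ZMod (2 * n)) * a1 = 1 := by
      ext x
      simp only [ha1, Equiv.coe_addRight, Equiv.Perm.mul_apply, Equiv.Perm.one_apply]
      ring
    rw [eq_inv_of_mul_eq_one_left hone]
    rw [map_inv]
    rw [hsigna1]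
    simp
  have hconj : Equiv.Perm.sign ((finToZMod n).permCongr (σ⁻¹ * flipPerm n * σ)) = (-1) ^ n := by
    rw [Equiv.Perm.sign_permCongr, map_mul, map_mul, map_inv, sign_flipPerm]
    rw [mul_comm ((Equiv.Perm.sign σ)⁻¹) _, mul_assoc, inv_mul_cancel, mul_one]
  unfold vertPerm
  rw [map_mul, map_mul, hsign2, hconj, hsignm1, one_mul, pow_succ]

end VertPerm


section Glue

open Equiv Equiv.Perm Relation

variable (n : ℕ) [NeZero (2 * n)] (σ : Equiv.Perm (Fin (2 * n)))

theorem vertRel_iff (x y : ZMod (2 * n)) :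
    vertRel n σ x y ↔ ∃ k : Fin n,
      (x = AV n σ k + 1 ∧ y = BV n σ k + 2) ∨ (x = AV n σ k + 2 ∧ y = BV n σ k + 1) :=
  Iff.rfl

theorem vertRel_quot_bound (hn : 1 ≤ n) :
    Nat.card (Quot (vertRel n σ)) ≤ n + 1 := by
  classical
  set l := (List.finRange n).map (fun k => (AV n σ k + 1, BV n σ k + 1)) with hl
  have hlen : l.length = n := by simp [hl]
  have hle := card_quot_le_list l (vertRel n σ)
  rw [hlen] at hle
  set R := fun u v => vertRel n σ u v ∨ (u, v) ∈ l with hR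
  have hone : Nat.card (Quot R) = 1 := by
    rw [Nat.card_eq_one_iff_unique]
    refine ⟨⟨?_⟩, ⟨Quot.mk R 0⟩⟩
    intro c d
    obtain ⟨x, rfl⟩ := Quot.exists_rep c
    obtain ⟨y, rfl⟩ := Quot.exists_rep d
    have hmem : ∀ k : Fin n, (AV n σ k + 1, BV n σ k + 1) ∈ l := by
      intro k; rw [hl]; exact List.mem_map.2 ⟨k, List.mem_finRange k, rfl⟩
    have e1 : ∀ k : Fin n, Quot.mk R (AV n σ k + 1) = Quot.mk R (BV n σ k + 2) :=
      fun k => Quot.sound (Or.inl ((vertRel_iff n σ _ _).2 ⟨k, Or.inl ⟨rfl, rfl⟩⟩))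
    have e2 : ∀ k : Fin n, Quot.mk R (AV n σ k + 2) = Quot.mk R (BV n σ k + 1) :=
      fun k => Quot.sound (Or.inl ((vertRel_iff n σ _ _).2 ⟨k, Or.inr ⟨rfl, rfl⟩⟩))
    have e3 : ∀ k : Fin n, Quot.mk R (AV n σ k + 1) = Quot.mk R (BV n σ k + 1) :=
      fun k => Quot.sound (Or.inr (hmem k))
    have step : ∀ x : ZMod (2 * n), Quot.mk R x = Quot.mk R (x + 1) := by
      intro x
      obtain ⟨k, hx | hx⟩ := vert_spec n σ x
      · rw [hx, show AV n σ k + 1 + 1 = AV n σ k + 2 by ring]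
        exact (e3 k).trans (e2 k).symm
      · rw [hx, show BV n σ k + 1 + 1 = BV n σ k + 2 by ring]
        exact (e3 k).symm.trans (e1 k)
    have steps : ∀ (m : ℕ) (x : ZMod (2 * n)), Quot.mk R x = Quot.mk R (x + m) := by
      intro m
      induction m with
      | zero => intro x; simp
      | succ m ih =>
        intro x
        rw [show (x + ((m + 1 : ℕ) : ZMod (2 * n))) = (x + m) + 1 by push_cast; ring]
        exact (ih x).trans (step (x + m))
    have hsteps := steps (y - x).val x
    rwa [show x + (((y - x).val : ℕ) : ZMod (2 * n)) = y by
      rw [ZMod.natCast_rightInverse (y - x)]; ring] at hsteps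
  omega

theorem vertRel_card_eq_sameCycle :
    Nat.card (Quot (vertRel n σ)) = Nat.card (Quot (vertPerm n σ).SameCycle) := by
  apply Nat.card_congr
  apply quotCongrOfEqvGen
  intro x y
  have hequiv : Equivalence (vertPerm n σ).SameCycle :=
    ⟨fun a => Equiv.Perm.SameCycle.refl _ a, fun h => h.symm, fun h1 h2 => h1.trans h2⟩
  rw [hequiv.eqvGen_iff]
  have stepEqv : ∀ z, EqvGen (vertRel n σ) z (vertPerm n σ z) := by
    intro z
    obtain ⟨k, hz | hz⟩ := vert_spec n σ z
    · exact EqvGen.rel _ _ ((vertRel_iff n σ _ _).2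
        ⟨k, Or.inl ⟨hz, by rw [hz, vertPerm_AV]⟩⟩)
    · exact EqvGen.symm _ _ (EqvGen.rel _ _ ((vertRel_iff n σ _ _).2
        ⟨k, Or.inr ⟨by rw [hz, vertPerm_BV], hz⟩⟩))
  constructor
  · intro h
    induction h with
    | rel u v huv =>
      obtain ⟨k, ⟨hu, hv⟩ | ⟨hu, hv⟩⟩ := (vertRel_iff n σ u v).1 huv
      · exact ⟨1, by rw [zpow_one, hu, vertPerm_AV, hv]⟩
      · exact Equiv.Perm.SameCycle.symm ⟨1, by rw [zpow_one, hv, vertPerm_BV, hu]⟩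
    | refl u => exact Equiv.Perm.SameCycle.refl _ _
    | symm u v _ ih => exact ih.symm
    | trans u v w _ _ ih1 ih2 => exact ih1.trans ih2
  · intro h
    obtain ⟨m, _, hpow⟩ := h.exists_pow_eq'
    have key : ∀ (m : ℕ) (x : ZMod (2 * n)),
        EqvGen (vertRel n σ) x (((vertPerm n σ) ^ m) x) := by
      intro m
      induction m with
      | zero => intro x; rw [pow_zero, Equiv.Perm.one_apply]; exact EqvGen.refl x
      | succ m ih =>
        intro x
        rw [pow_succ, Equiv.Perm.mul_apply]
        exact EqvGen.trans _ _ _ (stepEqv x) (ih (vertPerm n σ x))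
    rw [← hpow]
    exact key m x

end Glue

theorem neg_one_pow_units_mod {a b : ℕ} (h : (-1 : ℤˣ) ^ a = (-1) ^ b) : a % 2 = b % 2 := by
  rcases Nat.even_or_odd a with ha | ha <;> rcases Nat.even_or_odd b with hb | hb
  · rw [Nat.even_iff] at ha hb; omega
  · rw [ha.neg_one_pow, hb.neg_one_pow] at h
    exact absurd (congrArg Units.val h) (by norm_num)
  · rw [ha.neg_one_pow, hb.neg_one_pow] at h
    exact absurd (congrArg Units.val h) (by norm_num)
  · rw [Nat.odd_iff] at ha hb; omega

/-- If `s` is the number of equivalence classes of the equivalence relation generated by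
the vertex identifications (i.e. the number of elements of the quotient `Quot (vertRel n σ)`),
then `s ≤ n + 1` and `n + 1 − s` is even. -/
theorem vertex_classes_card (n : ℕ) (hn : 1 ≤ n) (σ : Equiv.Perm (Fin (2 * n)))
    (s : ℕ) (hs : s = Nat.card (Quot (vertRel n σ))) :
    s ≤ n + 1 ∧ Even (n + 1 - s) := by
  subst hs
  haveI : NeZero (2 * n) := ⟨by omega⟩
  have hbound := vertRel_quot_bound n σ hn
  have hcardeq := vertRel_card_eq_sameCycle n σ
  have hcount := card_quot_sameCycle (vertPerm n σ)
  have hsign := sign_vertPerm n σ hn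
  rw [Equiv.Perm.sign_of_cycleType] at hsign
  have hpar := neg_one_pow_units_mod hsign
  rw [ZMod.card (2 * n)] at hcount
  refine ⟨hbound, ?_⟩
  rw [Nat.even_iff]
  omega
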